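/- arXiv:1309.3150 — 5 statements merged into one kernel-verified Lean document; each statement's English description precedes it below -/
import Mathlib

section
/- Let n ≥ 2 and δ(m,k) = (m + 2^k) mod n. Suppose rows m' and m'' (with m' ≠ m'' or k' ≠ k'') satisfy δ(m',k') = δ(m'',k'') = ℓ with k'' > k', and let 0 ≤ k* < k' and 0 ≤ k** < k''. Then δ(m',k*) ≠ δ(m'',k**), i.e., the prefixes of ℓ in the two rows are disjoint. -/
/-- Prefix-disjointness of the DFS scheme: if `ℓ` appears at position `k'` of
row `m'` and at position `k''` of row `m''` (with `k'' > k'`) of the matrix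
`δ(m,k) = (m + 2^k) mod n`, then no entry strictly before `ℓ` in row `m'`
coincides with an entry strictly before `ℓ` in row `m''`. -/
theorem stmt_3 (n : ℕ) (hn : 2 ≤ n)
    (m' m'' k' k'' kS kSS ℓ : ℕ)
    (hm' : m' ≤ n - 2) (hm'' : m'' ≤ n - 2)
    (hk' : k' ≤ Nat.log 2 n - 1) (hk'' : k'' ≤ Nat.log 2 n - 1)
    (hkS : kS ≤ Nat.log 2 n - 1) (hkSS : kSS ≤ Nat.log 2 n - 1)
    (hne : m' ≠ m'' ∨ k' ≠ k'')
    (hℓ' : (m' + 2 ^ k') % n = ℓ) (hℓ'' : (m'' + 2 ^ k'') % n = ℓ)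
    (hord : k' < k'') (hpre' : kS < k') (hpre'' : kSS < k'') :
    (m' + 2 ^ kS) % n ≠ (m'' + 2 ^ kSS) % n := by
  intro h
  -- bounds on powers, in ℤ
  have hb'' : ((2 : ℤ) ^ k'') ≤ n := by
    have : (2 : ℕ) ^ k'' ≤ n :=
      calc 2 ^ k'' ≤ 2 ^ Nat.log 2 n :=
            Nat.pow_le_pow_right (by norm_num) (le_trans hk'' (Nat.sub_le _ _))
        _ ≤ n := Nat.pow_log_le_self 2 (by omega)
    exact_mod_cast this
  have hb' : (2 : ℤ) ^ k' ≤ 2 ^ (k'' - 1) := by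
    have : (2 : ℕ) ^ k' ≤ 2 ^ (k'' - 1) :=
      Nat.pow_le_pow_right (by norm_num) (by omega)
    exact_mod_cast this
  have hS : (2 : ℤ) ^ kS < 2 ^ k' := by
    have : (2 : ℕ) ^ kS < 2 ^ k' := Nat.pow_lt_pow_right (by norm_num) hpre'
    exact_mod_cast this
  have hSS : (2 : ℤ) ^ kSS < 2 ^ k'' := by
    have : (2 : ℕ) ^ kSS < 2 ^ k'' := Nat.pow_lt_pow_right (by norm_num) hpre''
    exact_mod_cast this
  have hsplit : (2 : ℤ) ^ (k'' - 1) + 2 ^ (k'' - 1) = 2 ^ k'' := by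
    have h1 : k'' - 1 + 1 = k'' := by omega
    calc (2 : ℤ) ^ (k'' - 1) + 2 ^ (k'' - 1) = 2 ^ (k'' - 1) * 2 := by ring
      _ = 2 ^ (k'' - 1 + 1) := (pow_succ 2 _).symm
      _ = 2 ^ k'' := by rw [h1]
  have hSSle : (2 : ℤ) ^ kSS ≤ 2 ^ (k'' - 1) := by
    have : (2 : ℕ) ^ kSS ≤ 2 ^ (k'' - 1) :=
      Nat.pow_le_pow_right (by norm_num) (by omega)
    exact_mod_cast this
  have hposS : (0 : ℤ) < 2 ^ kS := by positivity
  have hposSS : (0 : ℤ) < 2 ^ kSS := by positivity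
  -- integer congruences
  have h1 : ((m' : ℤ) + 2 ^ k') ≡ ((m'' : ℤ) + 2 ^ k'') [ZMOD n] := by
    have h1' : (m' + 2 ^ k' : ℕ) ≡ (m'' + 2 ^ k'' : ℕ) [MOD n] := hℓ'.trans hℓ''.symm
    have := Int.natCast_modEq_iff.mpr h1'
    push_cast at this
    exact this
  have h2 : ((m' : ℤ) + 2 ^ kS) ≡ ((m'' : ℤ) + 2 ^ kSS) [ZMOD n] := by
    have h2' : (m' + 2 ^ kS : ℕ) ≡ (m'' + 2 ^ kSS : ℕ) [MOD n] := h
    have := Int.natCast_modEq_iff.mpr h2'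
    push_cast at this
    exact this
  have hsub : ((2 : ℤ) ^ k' - 2 ^ kS) ≡ ((2 : ℤ) ^ k'' - 2 ^ kSS) [ZMOD n] := by
    have := h1.sub h2
    simpa using this
  -- both sides lie in [0, n)
  have heq : ((2 : ℤ) ^ k' - 2 ^ kS) = ((2 : ℤ) ^ k'' - 2 ^ kSS) := by
    have ha0 : (0 : ℤ) ≤ 2 ^ k' - 2 ^ kS := by linarith
    have han : (2 : ℤ) ^ k' - 2 ^ kS < n := by linarith
    have hb0 : (0 : ℤ) ≤ 2 ^ k'' - 2 ^ kSS := by linarith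
    have hbn : (2 : ℤ) ^ k'' - 2 ^ kSS < n := by linarith
    have hmod := hsub
    unfold Int.ModEq at hmod
    rwa [Int.emod_eq_of_lt ha0 han, Int.emod_eq_of_lt hb0 hbn] at hmod
  -- conclude: 2^kSS > 2^(k''-1), contradiction with hSSle
  linarith
end

section
/- Let G be the complete graph on n ≥ 4 vertices, and remove the following edges: ⌊n/2⌋ - 1 edges incident to a fixed vertex v_n (none equal to (v_k, v_n)), and n - ⌊n/2⌋ edges incident to a fixed vertex v_k ≠ v_n (including possibly the edge (v_k,v_n)). Then the resulting graph has minimum edge cut at least ⌊n/2⌋ - 1, i.e., it is (⌊n/2⌋ - 1)-edge-connected. -/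
open scoped Classical

/-- After removing `⌊n/2⌋ - 1` edges incident to `vn` (none equal to `(vk,vn)`)
and `n - ⌊n/2⌋` edges incident to `vk` from the complete graph on `n ≥ 4`
vertices, every nontrivial vertex cut is still crossed by at least
`⌊n/2⌋ - 1` remaining edges. -/
theorem stmt_6 (n : ℕ) (hn : 4 ≤ n) (vn vk : Fin n) (hvkn : vk ≠ vn)
    (A B : Finset (Sym2 (Fin n)))
    (hA : ∀ e ∈ A, vn ∈ e ∧ ¬ e.IsDiag)
    (hAvk : s(vk, vn) ∉ A)
    (hAcard : A.card = n / 2 - 1)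
    (hB : ∀ e ∈ B, vk ∈ e ∧ ¬ e.IsDiag)
    (hBcard : B.card = n - n / 2)
    (G : SimpleGraph (Fin n)) (hG : G = (⊤ : SimpleGraph (Fin n)).deleteEdges (↑A ∪ ↑B))
    (S : Finset (Fin n)) (hS : S.Nonempty) (hS' : S ≠ Finset.univ) :
    n / 2 - 1 ≤ ((S ×ˢ Sᶜ).filter (fun p : Fin n × Fin n => G.Adj p.1 p.2)).card := by
  classical
  subst hG
  set P : Finset (Fin n × Fin n) := S ×ˢ Sᶜ with hP
  set bad : Finset (Fin n × Fin n) := P.filter (fun p => s(p.1, p.2) ∈ A ∪ B) with hbad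
  -- key helper: few removed edges touch any fixed vertex
  have hkey : ∀ v : Fin n, (((A ∪ B).filter (fun e => v ∈ e)).card) ≤ n - n / 2 := by
    intro v
    rw [Finset.filter_union]
    refine le_trans (Finset.card_union_le _ _) ?_
    by_cases hvk : v = vk
    · have hAf : A.filter (fun e => v ∈ e) = ∅ := by
        rw [Finset.eq_empty_iff_forall_notMem]
        intro e he
        rw [Finset.mem_filter] at he
        obtain ⟨heA, hve⟩ := he
        have h1 := hA e heA
        have : e = s(vk, vn) := by
          rw [← Sym2.mem_and_mem_iff hvkn]
          exact ⟨hvk ▸ hve, h1.1⟩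
        exact hAvk (this ▸ heA)
      have hBf : (B.filter (fun e => v ∈ e)).card ≤ B.card := Finset.card_filter_le _ _
      rw [hAf]
      simp only [Finset.card_empty, zero_add]
      omega
    · by_cases hvn : v = vn
      · have hBf : B.filter (fun e => v ∈ e) ⊆ {s(vk, vn)} := by
          intro e he
          rw [Finset.mem_filter] at he
          obtain ⟨heB, hve⟩ := he
          have h1 := hB e heB
          rw [Finset.mem_singleton, ← Sym2.mem_and_mem_iff hvkn]
          exact ⟨h1.1, hvn ▸ hve⟩
        have hBc : (B.filter (fun e => v ∈ e)).card ≤ 1 := by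
          calc (B.filter (fun e => v ∈ e)).card ≤ ({s(vk,vn)} : Finset _).card :=
                Finset.card_le_card hBf
            _ = 1 := Finset.card_singleton _
        have hAc : (A.filter (fun e => v ∈ e)).card ≤ A.card := Finset.card_filter_le _ _
        omega
      · have hAf : A.filter (fun e => v ∈ e) ⊆ {s(v, vn)} := by
          intro e he
          rw [Finset.mem_filter] at he
          obtain ⟨heA, hve⟩ := he
          have h1 := hA e heA
          rw [Finset.mem_singleton, ← Sym2.mem_and_mem_iff hvn]
          exact ⟨hve, h1.1⟩
        have hBf : B.filter (fun e => v ∈ e) ⊆ {s(v, vk)} := by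
          intro e he
          rw [Finset.mem_filter] at he
          obtain ⟨heB, hve⟩ := he
          have h1 := hB e heB
          rw [Finset.mem_singleton, ← Sym2.mem_and_mem_iff hvk]
          exact ⟨hve, h1.1⟩
        have hAc : (A.filter (fun e => v ∈ e)).card ≤ 1 := by
          calc _ ≤ ({s(v,vn)} : Finset _).card := Finset.card_le_card hAf
            _ = 1 := Finset.card_singleton _
        have hBc : (B.filter (fun e => v ∈ e)).card ≤ 1 := by
          calc _ ≤ ({s(v,vk)} : Finset _).card := Finset.card_le_card hBf
            _ = 1 := Finset.card_singleton _
        omega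
  -- injectivity of the pair → edge map on P
  have hinj : Set.InjOn (fun p : Fin n × Fin n => s(p.1, p.2)) P := by
    intro p hp q hq h
    simp only [hP, Finset.coe_product, Set.mem_prod, Finset.mem_coe, Finset.mem_compl] at hp hq
    simp only [Sym2.eq, Sym2.rel_iff', Prod.mk.injEq, Prod.swap_prod_mk] at h
    rcases h with ⟨h1, h2⟩ | ⟨h1, h2⟩
    · exact Prod.ext h1 h2
    · exact absurd (h1 ▸ hp.1) hq.2
  -- split P.card
  have hsplit : (P.filter (fun p : Fin n × Fin n =>
      ((⊤ : SimpleGraph (Fin n)).deleteEdges (↑A ∪ ↑B)).Adj p.1 p.2)).card + bad.card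
      = P.card := by
    have h := Finset.card_filter_add_card_filter_not
      (s := P) (p := fun p : Fin n × Fin n =>
        ((⊤ : SimpleGraph (Fin n)).deleteEdges (↑A ∪ ↑B)).Adj p.1 p.2)
    have hEq : P.filter (fun p : Fin n × Fin n =>
        ¬ ((⊤ : SimpleGraph (Fin n)).deleteEdges (↑A ∪ ↑B)).Adj p.1 p.2) = bad := by
      rw [hbad]
      apply Finset.filter_congr
      intro p hp
      rw [hP, Finset.mem_product, Finset.mem_compl] at hp
      have hne : p.1 ≠ p.2 := fun h => hp.2 (h ▸ hp.1)
      simp only [SimpleGraph.deleteEdges_adj, SimpleGraph.top_adj, hne, not_false_iff,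
        true_and, not_not, Set.mem_union, Finset.mem_coe, Finset.mem_union]
      tauto
    rw [← hEq]
    exact h
  have hPcard : P.card = S.card * Sᶜ.card := Finset.card_product _ _
  have hsum : S.card + Sᶜ.card = n := by
    rw [Finset.card_add_card_compl]
    simp
  have hs1 : 1 ≤ S.card := Finset.card_pos.mpr hS
  have hs2 : 1 ≤ Sᶜ.card :=
    Finset.card_pos.mpr (Finset.nonempty_iff_ne_empty.mpr
      (fun h => hS' ((Finset.compl_eq_empty_iff S).mp h)))
  have hbadle : bad.card ≤ (A ∪ B).card := by
    apply Finset.card_le_card_of_injOn (fun p : Fin n × Fin n => s(p.1, p.2))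
    · intro p hp
      rw [hbad, Finset.mem_coe, Finset.mem_filter] at hp
      exact hp.2
    · exact hinj.mono (by rw [hbad]; exact Finset.filter_subset _ _)
  have hABcard : (A ∪ B).card ≤ n - 1 := by
    refine le_trans (Finset.card_union_le _ _) ?_
    omega
  by_cases hcase : 2 ≤ S.card ∧ 2 ≤ Sᶜ.card
  · obtain ⟨ha, hb⟩ := hcase
    have hm : 2 * n ≤ S.card * Sᶜ.card + 4 := by nlinarith
    rw [Finset.filter_congr_decidable]
    omega
  · -- one side is a singleton
    have hsing : S.card = 1 ∨ Sᶜ.card = 1 := by omega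
    rcases hsing with h1 | h1
    · obtain ⟨v, hv⟩ := Finset.card_eq_one.mp h1
      have hbadle2 : bad.card ≤ ((A ∪ B).filter (fun e => v ∈ e)).card := by
        apply Finset.card_le_card_of_injOn (fun p : Fin n × Fin n => s(p.1, p.2))
        · intro p hp
          rw [hbad, Finset.mem_coe, Finset.mem_filter] at hp
          obtain ⟨hpP, hpAB⟩ := hp
          rw [hP, Finset.mem_product] at hpP
          have : p.1 = v := by rw [hv, Finset.mem_singleton] at hpP; exact hpP.1
          rw [Finset.mem_coe, Finset.mem_filter]
          exact ⟨hpAB, this ▸ Sym2.mem_mk_left _ _⟩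
        · exact hinj.mono (by rw [hbad]; exact Finset.filter_subset _ _)
      have := hkey v
      have hm1 : P.card = Sᶜ.card := by rw [hPcard, h1, one_mul]
      rw [Finset.filter_congr_decidable]
      omega
    · obtain ⟨v, hv⟩ := Finset.card_eq_one.mp h1
      have hbadle2 : bad.card ≤ ((A ∪ B).filter (fun e => v ∈ e)).card := by
        apply Finset.card_le_card_of_injOn (fun p : Fin n × Fin n => s(p.1, p.2))
        · intro p hp
          rw [hbad, Finset.mem_coe, Finset.mem_filter] at hp
          obtain ⟨hpP, hpAB⟩ := hp
          rw [hP, Finset.mem_product] at hpP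
          have : p.2 = v := by rw [hv, Finset.mem_singleton] at hpP; exact hpP.2
          rw [Finset.mem_coe, Finset.mem_filter]
          exact ⟨hpAB, this ▸ Sym2.mem_mk_right _ _⟩
        · exact hinj.mono (by rw [hbad]; exact Finset.filter_subset _ _)
      have := hkey v
      have hm1 : P.card = S.card := by rw [hPcard, h1, mul_one]
      rw [Finset.filter_congr_decidable]
      omega
end

section
/- Let m', m'' ∈ [0, n-2] and k', k'', k*, k** ∈ [0, ⌊log₂ n⌋ - 1] with k* < k', k** < k'', k'' > k'. If m' + 2^{k'} ≡ m'' + 2^{k''} (mod n) and m' + 2^{k*} ≡ m'' + 2^{k**} (mod n), then subtracting yields 2^{k**} - 2^{k''} + 2^{k'} - 2^{k*} ≡ 0 (mod n), with the four powers distinct (since k'' > k', k** < k'', k* < k' and no power repeats within a column), which is impossible. -/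
/-- Full prefix-disjointness claim (Claim 3) for the DFS matrix
`δ(m,k) = (m + 2^k) mod n`: the two congruences
`m' + 2^k' ≡ m'' + 2^k'' (mod n)` and `m' + 2^k* ≡ m'' + 2^k** (mod n)`
(with `k* < k'`, `k** < k''`, `k'' > k'`, all exponents below `⌊log₂ n⌋`
and rows in `[0, n-2]`) are together impossible. -/
theorem stmt_16 (n : ℕ) (hn : 2 ≤ n)
    (m' m'' k' k'' kS kSS : ℕ)
    (hm' : m' ≤ n - 2) (hm'' : m'' ≤ n - 2)
    (hk' : k' ≤ Nat.log 2 n - 1) (hk'' : k'' ≤ Nat.log 2 n - 1)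
    (hkS : kS ≤ Nat.log 2 n - 1) (hkSS : kSS ≤ Nat.log 2 n - 1)
    (hpre' : kS < k') (hpre'' : kSS < k'') (hord : k' < k'')
    (hcong1 : m' + 2 ^ k' ≡ m'' + 2 ^ k'' [MOD n])
    (hcong2 : m' + 2 ^ kS ≡ m'' + 2 ^ kSS [MOD n]) :
    False := by
  have hb : (0:ℕ) < 2 := by norm_num
  have hLpos : 0 < Nat.log 2 n := Nat.log_pos one_lt_two hn
  have hk''1 : 1 ≤ k'' := by omega
  have hL2 : 2 ≤ Nat.log 2 n := by omega
  have hpow : 2 ^ Nat.log 2 n ≤ n := Nat.pow_log_le_self 2 (by omega)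
  have hc : (m' + m'') + (2 ^ k' + 2 ^ kSS) ≡ (m' + m'') + (2 ^ kS + 2 ^ k'') [MOD n] := by
    have h := hcong1.add hcong2.symm
    have e1 : (m' + 2 ^ k') + (m'' + 2 ^ kSS) = (m' + m'') + (2 ^ k' + 2 ^ kSS) := by ring
    have e2 : (m'' + 2 ^ k'') + (m' + 2 ^ kS) = (m' + m'') + (2 ^ kS + 2 ^ k'') := by ring
    rwa [e1, e2] at h
  have hc2 : 2 ^ k' + 2 ^ kSS ≡ 2 ^ kS + 2 ^ k'' [MOD n] :=
    Nat.ModEq.add_left_cancel' _ hc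
  have b1 : 2 ^ k' ≤ 2 ^ (k'' - 1) := Nat.pow_le_pow_right hb (by omega)
  have b2 : 2 ^ kSS ≤ 2 ^ (k'' - 1) := Nat.pow_le_pow_right hb (by omega)
  have b3 : 2 ^ kS ≤ 2 ^ (Nat.log 2 n - 2) := Nat.pow_le_pow_right hb (by omega)
  have b4 : 2 ^ k'' ≤ 2 ^ (Nat.log 2 n - 1) := Nat.pow_le_pow_right hb hk''
  have e3 : 2 ^ (k'' - 1) * 2 = 2 ^ k'' := by rw [← pow_succ]; congr 1; omega
  have e4 : 2 ^ (Nat.log 2 n - 2) * 2 = 2 ^ (Nat.log 2 n - 1) := by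
    rw [← pow_succ]; congr 1; omega
  have e5 : 2 ^ (Nat.log 2 n - 1) * 2 = 2 ^ Nat.log 2 n := by
    rw [← pow_succ]; congr 1; omega
  have p1 : 1 ≤ 2 ^ (Nat.log 2 n - 1) := Nat.one_le_two_pow
  have p2 : 1 ≤ 2 ^ (Nat.log 2 n - 2) := Nat.one_le_two_pow
  have p3 : 1 ≤ 2 ^ kS := Nat.one_le_two_pow
  have hlt1 : 2 ^ k' + 2 ^ kSS < n := by omega
  have hlt2 : 2 ^ kS + 2 ^ k'' < n := by omega
  have heq : 2 ^ k' + 2 ^ kSS = 2 ^ kS + 2 ^ k'' := by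
    have h := hc2
    rwa [Nat.ModEq, Nat.mod_eq_of_lt hlt1, Nat.mod_eq_of_lt hlt2] at h
  omega
end

section
/- Suppose an adversary must, in order to place L flows on a node w, spend at least j link failures for the flow whose failover sequence has w at position j, and the failure sets for distinct flows are pairwise disjoint. If the total failure budget is φ, then the maximum achievable load L satisfies L(L+1)/2 ≤ φ, hence L ≤ ⌊(√(8φ+1) - 1)/2⌋ < √(2φ). -/
lemma aux_strictMono_ge {n : ℕ} (g : Fin n → ℕ) (hg : StrictMono g)
    (h1 : ∀ i, 1 ≤ g i) : ∀ i : Fin n, (i : ℕ) + 1 ≤ g i := by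
  intro i
  obtain ⟨k, hk⟩ := i
  induction k with
  | zero => exact h1 _
  | succ m ih =>
    have hm : m < n := by omega
    have h2 := hg (show (⟨m, hm⟩ : Fin n) < ⟨m + 1, hk⟩ by simp [Fin.lt_def])
    have h3 := ih hm
    simp only at h2 h3 ⊢
    omega

/-- Abstract DFS upper bound: routing `L` flows to a node `w` costs at least
`j` failures for the flow whose sequence has `w` at position `j` (positions
`pos i ≥ 1` are pairwise distinct since the failure sets are disjoint).
With a total budget `φ`, the load satisfies `L(L+1)/2 ≤ φ`, hence
`L ≤ ⌊(√(8φ+1)-1)/2⌋ < √(2φ)`. -/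
theorem stmt_17 (L φ : ℕ) (hφ : 0 < φ)
    (pos : Fin L → ℕ) (hpos : ∀ i, 1 ≤ pos i) (hinj : Function.Injective pos)
    (hbudget : ∑ i, pos i ≤ φ) :
    L * (L + 1) / 2 ≤ φ ∧
    (L : ℝ) ≤ (⌊(Real.sqrt (8 * φ + 1) - 1) / 2⌋ : ℝ) ∧
    (⌊(Real.sqrt (8 * φ + 1) - 1) / 2⌋ : ℝ) < Real.sqrt (2 * φ) := by
  -- Part 1
  set s : Finset ℕ := Finset.univ.image pos with hs
  have hcard : s.card = L := by
    rw [hs, Finset.card_image_of_injective _ hinj, Finset.card_univ, Fintype.card_fin]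
  have hsum_s : ∑ x ∈ s, x = ∑ i, pos i := by
    rw [hs, Finset.sum_image (fun a _ b _ h => hinj h)]
  set g : Fin L → ℕ := fun i => s.orderEmbOfFin hcard i with hg
  have hgmono : StrictMono g := (s.orderEmbOfFin hcard).strictMono
  have hgmem : ∀ i, g i ∈ s := fun i => s.orderEmbOfFin_mem hcard i
  have hg1 : ∀ i, 1 ≤ g i := by
    intro i
    obtain ⟨j, _, hj⟩ := Finset.mem_image.mp (hgmem i)
    exact hj ▸ hpos j
  have himg : Finset.univ.image g = s := by
    apply Finset.coe_injective
    rw [Finset.coe_image, Finset.coe_univ, Set.image_univ]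
    exact s.range_orderEmbOfFin hcard
  have hsum_g : ∑ i, g i = ∑ x ∈ s, x := by
    rw [← himg, Finset.sum_image (fun a _ b _ h => hgmono.injective h)]
  have hkey : ∑ i : Fin L, ((i : ℕ) + 1) ≤ ∑ i, g i :=
    Finset.sum_le_sum fun i _ => aux_strictMono_ge g hgmono hg1 i
  have htri : L * (L + 1) / 2 ≤ φ := by
    have h1 : ∑ i : Fin L, ((i : ℕ) + 1) = ∑ i ∈ Finset.range L, (i + 1) :=
      Fin.sum_univ_eq_sum_range _ _
    have h2 : ∑ i ∈ Finset.range (L + 1), i = (∑ i ∈ Finset.range L, (i + 1)) + 0 :=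
      Finset.sum_range_succ' id L
    have h3 : ∑ i ∈ Finset.range (L + 1), i = (L + 1) * L / 2 := Finset.sum_range_id (L + 1)
    have : (L + 1) * L / 2 ≤ φ := by
      rw [← h3, h2]
      simpa [h1] using le_trans hkey (le_trans (le_of_eq (hsum_g.trans hsum_s)) hbudget)
    have hcomm : L * (L + 1) = (L + 1) * L := Nat.mul_comm _ _
    omega
  -- common facts
  have hA : L * (L + 1) ≤ 2 * φ := by
    obtain ⟨c, hc⟩ := Nat.even_mul_succ_self L
    omega
  have hx0 : (0:ℝ) ≤ 8 * φ + 1 := by positivity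
  -- Part 2
  have hL : (L : ℝ) ≤ (Real.sqrt (8 * φ + 1) - 1) / 2 := by
    have hsq : ((2 * L + 1 : ℕ) : ℝ) ^ 2 ≤ (8 * φ + 1 : ℝ) := by
      have : (2 * L + 1) ^ 2 ≤ 8 * φ + 1 := by nlinarith
      push_cast
      exact_mod_cast this
    have h2 : (2 * (L:ℝ) + 1) ≤ Real.sqrt (8 * φ + 1) := by
      rw [Real.le_sqrt (by positivity : (0:ℝ) ≤ 2 * (L:ℝ) + 1) hx0]
      push_cast at hsq ⊢
      linarith
    linarith
  have hfloor : (L : ℤ) ≤ ⌊(Real.sqrt (8 * φ + 1) - 1) / 2⌋ := by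
    rw [Int.le_floor]; exact_mod_cast hL
  refine ⟨htri, by exact_mod_cast hfloor, ?_⟩
  -- Part 3
  · set k : ℤ := ⌊(Real.sqrt (8 * φ + 1) - 1) / 2⌋ with hk
    have hky : (k : ℝ) ≤ (Real.sqrt (8 * φ + 1) - 1) / 2 := Int.floor_le _
    have hk1 : (1 : ℤ) ≤ k := by
      rw [hk, Int.le_floor]
      have h9 : (9:ℝ) ≤ 8 * φ + 1 := by
        have : (1:ℝ) ≤ φ := by exact_mod_cast hφ
        linarith
      have : (3:ℝ) ≤ Real.sqrt (8 * φ + 1) := by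
        have := Real.sqrt_le_sqrt h9
        rwa [show Real.sqrt 9 = 3 by
          rw [show (9:ℝ) = 3 ^ 2 by norm_num, Real.sqrt_sq (by norm_num)]] at this
      push_cast
      linarith
    have h2k : 2 * (k:ℝ) + 1 ≤ Real.sqrt (8 * φ + 1) := by linarith
    have hsq : (2 * (k:ℝ) + 1) ^ 2 ≤ 8 * (φ:ℝ) + 1 := by
      have h0 : (0:ℝ) ≤ 2 * (k:ℝ) + 1 := by
        have : (1:ℝ) ≤ (k:ℝ) := by exact_mod_cast hk1
        linarith
      calc (2 * (k:ℝ) + 1) ^ 2 ≤ Real.sqrt (8 * (φ:ℝ) + 1) ^ 2 :=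
            pow_le_pow_left₀ h0 h2k 2
        _ = 8 * (φ:ℝ) + 1 := Real.sq_sqrt hx0
    have hklt : (k:ℝ) ^ 2 < 2 * φ := by
      have hk1' : (1:ℝ) ≤ (k:ℝ) := by exact_mod_cast hk1
      nlinarith
    rw [show ((k:ℤ):ℝ) = (k:ℝ) from rfl]
    rw [Real.lt_sqrt (by positivity)]
    exact hklt
end

section
/- For real numbers n ≥ 2 and d = 0.03·φ/ln n with φ ≥ 10·(ln n)⁴ and φ ≤ n, and r = d·ln n = 0.03·φ, the quantity (binom(n-d, r-d))/(binom(n, r)) is at most e^{-0.075·φ/ln n}. -/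
set_option maxHeartbeats 1600000 in
/-- Weak-adversary probability bound: with `d = 0.03·φ/ln n`, `r = 0.03·φ`,
`10·(ln n)⁴ ≤ φ ≤ n`, the ratio `C(n-d, r-d)/C(n, r)` (arguments rounded to
integers) is at most `e^{-0.075·φ/ln n}`. -/
theorem stmt_18 (n : ℕ) (φ : ℝ) (hn : 2 ≤ n)
    (hφ1 : 10 * Real.log n ^ 4 ≤ φ) (hφ2 : φ ≤ n) :
    ((n - ⌈0.03 * φ / Real.log n⌉₊).choose (⌊0.03 * φ⌋₊ - ⌈0.03 * φ / Real.log n⌉₊) : ℝ) /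
        (n.choose ⌊0.03 * φ⌋₊ : ℝ) ≤
      Real.exp (-(0.075 * φ / Real.log n)) := by
  have hlog2 : (0.6931471803 : ℝ) < Real.log 2 := Real.log_two_gt_d9
  set L := Real.log n with hLdef
  -- Step 1 : 2 ≤ L
  have hL2 : (2 : ℝ) ≤ L := by
    rcases le_or_gt 8 n with h8 | h8
    · have h1 : Real.log 8 ≤ L := Real.log_le_log (by norm_num) (by exact_mod_cast h8)
      have h8e : Real.log 8 = 3 * Real.log 2 := by
        rw [show (8 : ℝ) = 2 ^ 3 by norm_num, Real.log_pow]; push_cast; ring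
      linarith
    · exfalso
      rcases le_or_gt 3 n with h3 | h3
      · have hlog3 : Real.log 3 ≤ L := Real.log_le_log (by norm_num) (by exact_mod_cast h3)
        have h9 : Real.log 8 ≤ Real.log 9 := Real.log_le_log (by norm_num) (by norm_num)
        have h8e : Real.log 8 = 3 * Real.log 2 := by
          rw [show (8 : ℝ) = 2 ^ 3 by norm_num, Real.log_pow]; push_cast; ring
        have h9e : Real.log 9 = 2 * Real.log 3 := by
          rw [show (9 : ℝ) = 3 ^ 2 by norm_num, Real.log_pow]; push_cast; ring
        have hL : (1.03 : ℝ) ≤ L := by linarith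
        have hn7 : (n : ℝ) ≤ 7 := by exact_mod_cast Nat.lt_succ_iff.mp h8
        nlinarith [pow_le_pow_left₀ (by norm_num : (0:ℝ) ≤ 1.03) hL 4]
      · interval_cases n
        have hL' : (0.6931471803 : ℝ) < L := by
          rw [hLdef, Nat.cast_ofNat]; exact hlog2
        have hφ2' : φ ≤ 2 := by exact_mod_cast hφ2
        nlinarith [pow_le_pow_left₀ (by norm_num : (0:ℝ) ≤ 0.6931471803) hL'.le 4]
  have hLpos : (0 : ℝ) < L := by linarith
  have hφ160 : (160 : ℝ) ≤ φ := by
    nlinarith [pow_le_pow_left₀ (by norm_num : (0:ℝ) ≤ 2) hL2 4]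
  have hφpos : (0 : ℝ) < φ := by linarith
  set x := (0.03 : ℝ) * φ with hxdef
  have hx : (4.8 : ℝ) ≤ x := by rw [hxdef]; linarith
  set d := ⌈x / L⌉₊ with hddef
  set r := ⌊x⌋₊ with hrdef
  have hdle : (d : ℝ) < x / L + 1 := Nat.ceil_lt_add_one (by positivity)
  have hdge : x / L ≤ (d : ℝ) := Nat.le_ceil _
  have hrge : x - 1 < (r : ℝ) := Nat.sub_one_lt_floor x
  have hrle : (r : ℝ) ≤ x := Nat.floor_le (by positivity)
  clear_value d r
  clear_value x
  clear_value L
  have hdivle : x / L ≤ x / 2 :=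
    div_le_div_of_nonneg_left (by linarith) (by norm_num) hL2
  have hdr : d < r := by
    have : (d : ℝ) < (r : ℝ) := by linarith
    exact_mod_cast this
  have hrn : r ≤ n := by
    have : (r : ℝ) ≤ (n : ℝ) := by linarith
    exact_mod_cast this
  have hdn : d ≤ n := le_trans hdr.le hrn
  have hcn_r : ((n.choose r : ℝ)) ≠ 0 := by
    exact_mod_cast (Nat.choose_pos hrn).ne'
  have hcn_d : ((n.choose d : ℝ)) ≠ 0 := by
    exact_mod_cast (Nat.choose_pos hdn).ne'
  -- Step 2 : ratio = C(r,d)/C(n,d)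
  have key : ((n - d).choose (r - d) : ℝ) / (n.choose r : ℝ)
      = (r.choose d : ℝ) / (n.choose d : ℝ) := by
    rw [div_eq_div_iff hcn_r hcn_d]
    have h := Nat.choose_mul (n := n) hdr.le
    exact_mod_cast (by rw [mul_comm, ← h, mul_comm] :
      ((n - d).choose (r - d)) * (n.choose d) = r.choose d * n.choose r)
  rw [key]
  -- Step 3 : C(r,d)/C(n,d) = ∏_{i<d} (r-i)/(n-i)
  have hdesc : (r.choose d : ℝ) / (n.choose d : ℝ)
      = ∏ i ∈ Finset.range d, (((r : ℝ) - i) / ((n : ℝ) - i)) := by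
    have hdf : ∀ m : ℕ, d ≤ m →
        (m.descFactorial d : ℝ) = ∏ i ∈ Finset.range d, ((m : ℝ) - i) := by
      intro m hm
      rw [Nat.descFactorial_eq_prod_range, Nat.cast_prod]
      refine Finset.prod_congr rfl fun i hi => ?_
      rw [Nat.cast_sub (le_trans (Finset.mem_range.mp hi).le hm)]
    have hnum : (r.descFactorial d : ℝ) = (d.factorial : ℝ) * (r.choose d : ℝ) := by
      exact_mod_cast congrArg (Nat.cast : ℕ → ℝ) (Nat.descFactorial_eq_factorial_mul_choose r d)
    have hden : (n.descFactorial d : ℝ) = (d.factorial : ℝ) * (n.choose d : ℝ) := by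
      exact_mod_cast congrArg (Nat.cast : ℕ → ℝ) (Nat.descFactorial_eq_factorial_mul_choose n d)
    rw [Finset.prod_div_distrib, ← hdf r hdr.le, ← hdf n hdn, hnum, hden,
      mul_div_mul_left _ _ (by positivity : (d.factorial : ℝ) ≠ 0)]
  rw [hdesc]
  -- Step 4 : each factor ≤ exp (-3)
  have hexp3 : (0.03 : ℝ) ≤ Real.exp (-3) := by
    have h1 : Real.exp 1 < 2.7182818286 := Real.exp_one_lt_d9
    have h3 : Real.exp 3 < 21 := by
      have he : Real.exp 1 ^ 3 = Real.exp 3 := by exact_mod_cast Real.exp_one_pow 3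
      have := pow_lt_pow_left₀ h1 (Real.exp_pos 1).le (by norm_num : (3:ℕ) ≠ 0)
      rw [he] at this
      nlinarith
    rw [Real.exp_neg]
    have hp := Real.exp_pos 3
    have hinv := mul_inv_cancel₀ hp.ne'
    nlinarith [inv_pos.mpr hp]
  have hrn' : (r : ℝ) ≤ (n : ℝ) := by exact_mod_cast hrn
  have hdr' : (d : ℝ) < (r : ℝ) := by exact_mod_cast hdr
  have hnpos : (0 : ℝ) < (n : ℝ) := by positivity
  have hfac : ∀ i ∈ Finset.range d, ((r : ℝ) - i) / ((n : ℝ) - i) ≤ Real.exp (-3) := by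
    intro i hi
    have hi' : (i : ℝ) < d := by exact_mod_cast Finset.mem_range.mp hi
    have hni : (0 : ℝ) < (n : ℝ) - i := by linarith
    have h1 : ((r : ℝ) - i) / ((n : ℝ) - i) ≤ (r : ℝ) / n := by
      rw [div_le_div_iff₀ hni hnpos]
      nlinarith [mul_le_mul_of_nonneg_left hrn' (Nat.cast_nonneg (α := ℝ) i)]
    have h2 : (r : ℝ) / n ≤ 0.03 := by
      rw [div_le_iff₀ hnpos]
      have : x ≤ 0.03 * n := by rw [hxdef]; linarith
      linarith
    exact h1.trans (h2.trans hexp3)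
  have hnonneg : ∀ i ∈ Finset.range d, (0 : ℝ) ≤ ((r : ℝ) - i) / ((n : ℝ) - i) := by
    intro i hi
    have hi' : (i : ℝ) < d := by exact_mod_cast Finset.mem_range.mp hi
    have hni : (0 : ℝ) < (n : ℝ) - i := by linarith
    have : (0 : ℝ) ≤ (r : ℝ) - i := by linarith
    positivity
  calc ∏ i ∈ Finset.range d, (((r : ℝ) - i) / ((n : ℝ) - i))
      ≤ ∏ _i ∈ Finset.range d, Real.exp (-3) := Finset.prod_le_prod hnonneg hfac
    _ = Real.exp (-3) ^ d := by rw [Finset.prod_const, Finset.card_range]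
    _ = Real.exp (d * (-3)) := (Real.exp_nat_mul _ d).symm
    _ ≤ Real.exp (-(0.075 * φ / L)) := by
        apply Real.exp_le_exp.mpr
        have hxL : x / L = 0.03 * (φ / L) := by rw [hxdef]; ring
        have h75 : 0.075 * φ / L = 0.075 * (φ / L) := by ring
        have hφL : (0 : ℝ) ≤ φ / L := by positivity
        rw [h75]
        nlinarith [hdge, hxL]
end
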